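/- Let c ∈ ℝ^d_{>0} and for each V > 0 let Γ^V ⊂ ℤ^d_{≥0} be a nonempty set. Define Z^V = Σ_{x ∈ Γ^V} Π_{i=1}^d e^{−Vc_i}(Vc_i)^{x_i}/(x_i!). Then Z^V ≤ 1; moreover if there is a sequence ỹ^V ∈ (1/V)Γ^V with ỹ^V → c as V → ∞, then (1/V)·ln(Z^V) → 0. -/

import Mathlib

/-!
Each summand of `Z^V` is a product of Poisson weights `e^{-r} r^k / k!` with rates `r = V c_i`.
Summed over all of `ℤ^d_{≥0}` these give a product of Poisson masses, so `Z^V ≤ 1` and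
`log Z^V ≤ 0`. Conversely `Z^V` dominates the single summand at `x = V ỹ^V`, and by Stirling,
`log k! = k log k - k + o(k)`, the logarithm of a Poisson weight with `k / V → c` is
`V (a - c + a log (c / a)) + o(V)` with `a = k / V → c`, i.e. `o(V)`.
-/

open Filter Real Asymptotics Topology
open scoped Nat

noncomputable def poissonWeight (r : ℝ) (k : ℕ) : ℝ := exp (-r) * r ^ k / k !

lemma poissonWeight_pos {r : ℝ} (hr : 0 < r) (k : ℕ) : 0 < poissonWeight r k := by
  unfold poissonWeight; positivity

lemma poissonWeight_nonneg {r : ℝ} (hr : 0 ≤ r) (k : ℕ) : 0 ≤ poissonWeight r k := by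
  unfold poissonWeight; positivity

lemma sum_poissonWeight_le_one {r : ℝ} (hr : 0 ≤ r) (T : Finset ℕ) :
    ∑ k ∈ T, poissonWeight r k ≤ 1 := by
  have hT : T ⊆ Finset.range (T.sup id + 1) := fun k hk =>
    Finset.mem_range.2 (Nat.lt_succ_of_le (Finset.le_sup (f := id) hk))
  calc ∑ k ∈ T, poissonWeight r k
      ≤ ∑ k ∈ Finset.range (T.sup id + 1), poissonWeight r k :=
        Finset.sum_le_sum_of_subset_of_nonneg hT fun k _ _ => poissonWeight_nonneg hr k
    _ = exp (-r) * ∑ k ∈ Finset.range (T.sup id + 1), r ^ k / k ! := by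
        simp only [poissonWeight, Finset.mul_sum, mul_div_assoc]
    _ ≤ exp (-r) * exp r := by gcongr; exact sum_le_exp_of_nonneg hr _
    _ = 1 := by rw [← exp_add, neg_add_cancel, exp_zero]

lemma Finset.sum_prod_le_one {ι α : Type*} [Fintype ι] {f : ι → α → ℝ}
    (hf : ∀ i a, 0 ≤ f i a) (h1 : ∀ i (T : Finset α), ∑ a ∈ T, f i a ≤ 1)
    (S : Finset (ι → α)) : ∑ x ∈ S, ∏ i, f i (x i) ≤ 1 := by
  classical
  let t : ι → Finset α := fun i => S.image (fun x => x i)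
  have hS : S ⊆ Fintype.piFinset t := fun x hx =>
    Fintype.mem_piFinset.2 fun i => Finset.mem_image_of_mem _ hx
  calc ∑ x ∈ S, ∏ i, f i (x i)
      ≤ ∑ x ∈ Fintype.piFinset t, ∏ i, f i (x i) :=
        Finset.sum_le_sum_of_subset_of_nonneg hS fun x _ _ =>
          Finset.prod_nonneg fun i _ => hf i (x i)
    _ = ∏ i, ∑ a ∈ t i, f i a := (Finset.prod_univ_sum t f).symm
    _ ≤ 1 := Finset.prod_le_one (fun i _ => Finset.sum_nonneg fun a _ => hf i a)
        fun i _ => h1 i (t i)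

section ProductPoisson

variable {ι : Type*} [Fintype ι] {r : ι → ℝ}

lemma summable_prod_poissonWeight (hr : ∀ i, 0 ≤ r i) :
    Summable fun x : ι → ℕ => ∏ i, poissonWeight (r i) (x i) :=
  summable_of_sum_le (fun _ => Finset.prod_nonneg fun i _ => poissonWeight_nonneg (hr i) _)
    (Finset.sum_prod_le_one (fun i => poissonWeight_nonneg (hr i))
      fun i => sum_poissonWeight_le_one (hr i))

lemma tsum_subtype_prod_poissonWeight_le_one (hr : ∀ i, 0 ≤ r i) (s : Set (ι → ℕ)) :
    ∑' x : s, ∏ i, poissonWeight (r i) ((x : ι → ℕ) i) ≤ 1 :=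
  ((summable_prod_poissonWeight hr).tsum_subtype_le _ s
    fun _ => Finset.prod_nonneg fun i _ => poissonWeight_nonneg (hr i) _).trans <|
    tsum_le_of_sum_le' zero_le_one <|
      Finset.sum_prod_le_one (fun i => poissonWeight_nonneg (hr i))
        fun i => sum_poissonWeight_le_one (hr i)

end ProductPoisson

lemma isLittleO_log_factorial_sub :
    (fun n : ℕ => log n ! - (n * log n - n)) =o[atTop] fun n => (n : ℝ) := by
  have hn : Tendsto (fun n : ℕ => (n : ℝ)) atTop atTop := tendsto_natCast_atTop_atTop
  have hstirling : (fun n : ℕ => log (Stirling.stirlingSeq n)) =o[atTop] fun n => (n : ℝ) :=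
    ((Stirling.tendsto_stirlingSeq_sqrt_pi.log (by positivity)).isBigO_one ℝ).trans_isLittleO
      ((isLittleO_const_id_atTop (1 : ℝ)).comp_tendsto hn)
  have hlog : (fun n : ℕ => 1 / 2 * log (2 * n)) =o[atTop] fun n => (n : ℝ) :=
    ((isLittleO_log_id_atTop.comp_tendsto (hn.const_mul_atTop two_pos)).trans_isBigO
      ((isBigO_refl (fun n : ℕ => (n : ℝ)) atTop).const_mul_left 2)).const_mul_left _
  refine (hstirling.add hlog).congr' ?_ EventuallyEq.rfl
  filter_upwards [eventually_ne_atTop 0] with n hn0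
  have hn0' : (n : ℝ) ≠ 0 := by exact_mod_cast hn0
  rw [Stirling.log_stirlingSeq_formula, log_div hn0' (exp_ne_zero 1), log_exp]
  ring

lemma tendsto_log_poissonWeight_div {α : Type*} {l : Filter α} {c : ℝ} (hc : 0 < c)
    {V : α → ℝ} (hV : Tendsto V l atTop) {k : α → ℕ}
    (hk : Tendsto (fun n => (k n : ℝ) / V n) l (𝓝 c)) :
    Tendsto (fun n => log (poissonWeight (V n * c) (k n)) / V n) l (𝓝 0) := by
  have hVpos : ∀ᶠ n in l, 0 < V n := hV.eventually_gt_atTop 0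
  have hkpos : ∀ᶠ n in l, 0 < (k n : ℝ) := by
    filter_upwards [hk.eventually_const_lt hc, hVpos] with n hn hVn
    exact (div_pos_iff_of_pos_right hVn).1 hn
  have hk_atTop : Tendsto (fun n => k n) l atTop := by
    refine tendsto_natCast_atTop_iff.1 ((hk.pos_mul_atTop hc hV).congr' ?_)
    filter_upwards [hVpos] with n hVn
    exact div_mul_cancel₀ _ hVn.ne'
  have hrem : Tendsto (fun n => (log (k n)! - (k n * log (k n) - k n)) / V n) l (𝓝 0) := by
    have := (isLittleO_log_factorial_sub.tendsto_div_nhds_zero.comp hk_atTop).mul hk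
    rw [zero_mul] at this
    refine this.congr' ?_
    filter_upwards [hkpos] with n hkn
    simp only [Function.comp_apply]
    field_simp
  -- with `a = k / V`, the expansion reads `a - c + a (log c - log a) - o(1)`
  have hlim := ((hk.sub (tendsto_const_nhds (x := c))).add
    (hk.mul ((tendsto_const_nhds (x := log c)).sub (hk.log hc.ne')))).sub hrem
  rw [sub_self, sub_self, mul_zero, add_zero, sub_zero] at hlim
  refine hlim.congr' ?_
  filter_upwards [hkpos, hVpos] with n hkn hVn
  rw [log_div hkn.ne' hVn.ne', poissonWeight, log_div (by positivity) (by positivity),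
    log_mul (by positivity) (by positivity), log_exp, log_pow, log_mul hVn.ne' hc.ne']
  field_simp
  ring

theorem stmt_5_general (d : ℕ) (c : Fin d → ℝ) (hc : ∀ i, 0 < c i)
    (V : ℕ → ℝ) (hV : Tendsto V atTop atTop) (hVpos : ∀ n, 0 < V n)
    (Γ : ℕ → Set (Fin d → ℕ))
    (Z : ℕ → ℝ)
    (hZ : ∀ n, Z n = ∑' x : Γ n,
      ∏ i, Real.exp (-(V n * c i)) * (V n * c i) ^ ((x : Fin d → ℕ) i) /
        (Nat.factorial ((x : Fin d → ℕ) i))) :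
    (∀ n, Z n ≤ 1) ∧
      ((∃ y : ℕ → Fin d → ℕ, (∀ n, y n ∈ Γ n) ∧
          ∀ i, Tendsto (fun n => (y n i : ℝ) / V n) atTop (nhds (c i))) →
        Tendsto (fun n => (1 / V n) * Real.log (Z n)) atTop (nhds 0)) := by
  have hr : ∀ n i, 0 < V n * c i := fun n i => mul_pos (hVpos n) (hc i)
  replace hZ : ∀ n, Z n = ∑' x : Γ n, ∏ i, poissonWeight (V n * c i) ((x : Fin d → ℕ) i) := hZ
  have hZle : ∀ n, Z n ≤ 1 := fun n =>
    (hZ n).trans_le (tsum_subtype_prod_poissonWeight_le_one (fun i => (hr n i).le) _)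
  refine ⟨hZle, ?_⟩
  rintro ⟨y, hyΓ, hy⟩
  set T : ℕ → ℝ := fun n => ∏ i, poissonWeight (V n * c i) (y n i)
  have hTpos : ∀ n, 0 < T n := fun n =>
    Finset.prod_pos fun i _ => poissonWeight_pos (hr n i) _
  have hTZ : ∀ n, T n ≤ Z n := fun n => (hZ n).symm ▸
    ((summable_prod_poissonWeight fun i => (hr n i).le).subtype (Γ n)).le_tsum ⟨y n, hyΓ n⟩
      fun _ _ => Finset.prod_nonneg fun i _ => poissonWeight_nonneg (hr n i).le _
  have hT : Tendsto (fun n => 1 / V n * log (T n)) atTop (𝓝 0) := by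
    have := tendsto_finsetSum Finset.univ fun i _ =>
      tendsto_log_poissonWeight_div (hc i) hV (hy i)
    rw [Finset.sum_const_zero] at this
    refine this.congr fun n => ?_
    rw [log_prod fun i _ => (poissonWeight_pos (hr n i) _).ne', one_div_mul_eq_div, Finset.sum_div]
  refine tendsto_of_tendsto_of_tendsto_of_le_of_le hT tendsto_const_nhds (fun n => ?_) fun n => ?_
  · exact mul_le_mul_of_nonneg_left (log_le_log (hTpos n) (hTZ n)) (one_div_pos.2 (hVpos n)).le
  · exact mul_nonpos_of_nonneg_of_nonpos (one_div_pos.2 (hVpos n)).le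
      (log_nonpos ((hTpos n).trans_le (hTZ n)).le (hZle n))

/-- The normalizing constant `Z^V` of the product-form stationary distribution restricted to
`Γ^V` satisfies `Z^V ≤ 1`; moreover `(1/V) ln Z^V → 0` provided there are points of
`(1/V)Γ^V` approaching the complex balanced equilibrium `c`. -/
theorem stmt_5 (d : ℕ) (c : Fin d → ℝ) (hc : ∀ i, 0 < c i)
    (V : ℕ → ℝ) (hV : Tendsto V atTop atTop) (hVpos : ∀ n, 0 < V n)
    (Γ : ℕ → Set (Fin d → ℕ)) (hΓ : ∀ n, (Γ n).Nonempty)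
    (Z : ℕ → ℝ)
    (hZ : ∀ n, Z n = ∑' x : Γ n,
      ∏ i, Real.exp (-(V n * c i)) * (V n * c i) ^ ((x : Fin d → ℕ) i) /
        (Nat.factorial ((x : Fin d → ℕ) i))) :
    (∀ n, Z n ≤ 1) ∧
      ((∃ y : ℕ → Fin d → ℕ, (∀ n, y n ∈ Γ n) ∧
          ∀ i, Tendsto (fun n => (y n i : ℝ) / V n) atTop (nhds (c i))) →
        Tendsto (fun n => (1 / V n) * Real.log (Z n)) atTop (nhds 0)) :=
  stmt_5_general d c hc V hV hVpos Γ Z hZ
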